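/- arXiv:1908.08627 — 3 statements merged into one kernel-verified Lean document; each statement's English description precedes it below -/
import Mathlib

section
/- Let G be a simply sm-factorizable topological group. Then for every continuous function f : G → ℝ there exists a normal admissible subgroup N of G such that f is constant on the coset gN for each g ∈ G. -/
open Topology TopologicalSpace Pointwise Function Set

def IsCozero {X : Type*} [TopologicalSpace X] (U : Set X) : Prop :=
  ∃ f : X → ℝ, Continuous f ∧ U = f ⁻¹' {x : ℝ | x ≠ 0}

/-- A topological group is simply sm-factorizable if every cozero set is saturated with
respect to some continuous surjective homomorphism onto a separable metrizable topological group. -/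
def SimplySMFactorizable (G : Type*) [Group G] [TopologicalSpace G] : Prop :=
  ∀ U : Set G, IsCozero U →
    ∃ (H : Type) (gH : Group H) (tH : TopologicalSpace H),
      letI := gH
      letI := tH
      IsTopologicalGroup H ∧ SeparableSpace H ∧ MetrizableSpace H ∧
        ∃ π : G →* H, Continuous π ∧ Surjective π ∧ ⇑π ⁻¹' (⇑π '' U) = U

/-- A subset N of a topological group is an admissible subgroup if it is the intersection of a
sequence of open symmetric neighborhoods of the identity with Uₙ₊₁·Uₙ₊₁ ⊆ Uₙ. -/
def IsAdmissible {G : Type*} [Group G] [TopologicalSpace G] (N : Set G) : Prop :=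
  ∃ U : ℕ → Set G,
    (∀ n, IsOpen (U n) ∧ (1 : G) ∈ U n ∧ (U n)⁻¹ = U n) ∧
    (∀ n, U (n + 1) * U (n + 1) ⊆ U n) ∧ N = ⋂ n, U n

/-
Each of the countably many cozero sets `f ⁻¹' ball q r` (`q r : ℚ`) is saturated with respect to
a continuous homomorphism `πₙ` onto a separable metrizable group `Hₙ`. Let `N` be the kernel of
`Π πₙ : G →* Π Hₙ`. If `x ∈ N`, then `g * x` lies in every saturated set containing `g`, and the
rational balls separate points of `ℝ`, so `f (g * x) = f g`. Since `Π Hₙ` is metrizable, `{1}` is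
admissible there, and admissibility pulls back along continuous homomorphisms.
-/

open Metric

theorem IsAdmissible.preimage {G H : Type*} [Group G] [TopologicalSpace G] [Group H]
    [TopologicalSpace H] {S : Set H}
    (hS : IsAdmissible S) {π : G →* H} (hπ : Continuous π) : IsAdmissible (π ⁻¹' S) := by
  obtain ⟨U, hU, hmul, rfl⟩ := hS
  refine ⟨fun n => π ⁻¹' U n, fun n => ⟨(hU n).1.preimage hπ, ?_, ?_⟩, fun n => ?_, ?_⟩
  · simpa using (hU n).2.1
  · ext x
    rw [mem_inv, mem_preimage, mem_preimage, map_inv, ← mem_inv, (hU n).2.2]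
  · exact (preimage_mul_preimage_subset π).trans (preimage_mono (hmul n))
  · exact preimage_iInter

theorem isAdmissible_singleton_one (G : Type*) [Group G] [TopologicalSpace G]
    [IsTopologicalGroup G] [FirstCountableTopology G] [T1Space G] :
    IsAdmissible ({1} : Set G) := by
  obtain ⟨u, hu, hmul⟩ := IsTopologicalGroup.exists_antitone_basis_nhds_one G
  set V : ℕ → Set G := fun n => interior (u n) ∩ (interior (u n))⁻¹
  have hV_inv (n : ℕ) : (V n)⁻¹ = V n := by simp only [V, Set.inter_inv, inv_inv, inter_comm]
  have hV_open (n : ℕ) : IsOpen (V n) := isOpen_interior.inter isOpen_interior.inv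
  have hV_one (n : ℕ) : (1 : G) ∈ V n := by
    have : (1 : G) ∈ interior (u n) := mem_interior_iff_mem_nhds.2 (hu.mem n)
    exact ⟨this, by simpa using this⟩
  refine ⟨V, fun n => ⟨hV_open n, hV_one n, hV_inv n⟩, fun n => ?_, ?_⟩
  · have hsub : V (n + 1) * V (n + 1) ⊆ interior (u n) :=
      interior_maximal ((mul_subset_mul (inter_subset_left.trans interior_subset)
        (inter_subset_left.trans interior_subset)).trans (hmul n)) (hV_open _).mul_left
    refine subset_inter hsub ?_
    rw [← Set.inv_subset, mul_inv_rev, hV_inv]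
    exact hsub
  · refine (singleton_subset_iff.2 (mem_iInter.2 hV_one)).antisymm ?_
    rw [← ker_nhds (1 : G), hu.ker]
    exact subset_iInter₂ fun n _ =>
      (iInter_subset V n).trans (inter_subset_left.trans interior_subset)

theorem IsCozero.preimage {X Y : Type*} [TopologicalSpace X] [TopologicalSpace Y] {U : Set Y}
    (hU : IsCozero U) {f : X → Y} (hf : Continuous f) : IsCozero (f ⁻¹' U) := by
  obtain ⟨g, hg, rfl⟩ := hU
  exact ⟨g ∘ f, hg.comp hf, rfl⟩

theorem Metric.isCozero_ball {M : Type*} [PseudoMetricSpace M] (x : M) (r : ℝ) :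
    IsCozero (ball x r) := by
  refine ⟨fun y => max (r - dist y x) 0, by fun_prop, ?_⟩
  ext y
  simp only [mem_ball, mem_preimage, mem_ofPred_eq, ne_eq, max_eq_right_iff, not_le, sub_pos]

theorem Real.exists_rat_ball_mem_notMem {a b : ℝ} (hab : a ≠ b) :
    ∃ q r : ℚ, a ∈ ball (q : ℝ) r ∧ b ∉ ball (q : ℝ) r := by
  have hd : 0 < dist a b := dist_pos.2 hab
  obtain ⟨q, hq⟩ := exists_rat_near a (half_pos hd)
  rw [← Real.dist_eq] at hq
  obtain ⟨r, hqr, hr⟩ := exists_rat_btwn hq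
  refine ⟨q, r, hqr, fun hb => ?_⟩
  have := dist_triangle_right a b q
  rw [mem_ball] at hb
  linarith

theorem statement9_general (G : Type*) [Group G] [TopologicalSpace G]
    (hG : SimplySMFactorizable G) :
    ∀ f : G → ℝ, Continuous f →
      ∃ N : Subgroup G, N.Normal ∧ IsAdmissible (N : Set G) ∧
        ∀ g : G, ∀ x ∈ N, f (g * x) = f g := by
  intro f hf
  obtain ⟨c, hc⟩ := exists_surjective_nat (ℚ × ℚ)
  set W : ℕ → Set G := fun n => f ⁻¹' ball ((c n).1 : ℝ) (c n).2
  choose H _ _ _ _ _ π hπ _ hπW using fun n => hG (W n) ((isCozero_ball _ _).preimage hf)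
  refine ⟨(MonoidHom.pi π).ker, inferInstance, ?_, fun g x hx => ?_⟩
  · rw [MonoidHom.coe_ker]
    exact (isAdmissible_singleton_one _).preimage (continuous_pi hπ)
  · by_contra hne
    obtain ⟨q, r, hg, hgx⟩ := Real.exists_rat_ball_mem_notMem (Ne.symm hne)
    obtain ⟨n, hn⟩ := hc (q, r)
    have hπx : π n x = 1 := congrFun hx n
    have : g * x ∈ π n ⁻¹' (π n '' W n) := ⟨g, by simpa [W, hn], by simp [hπx]⟩
    rw [hπW n] at this
    exact hgx (by simpa [W, hn] using this)

/-- In a simply sm-factorizable topological group, every continuous real-valued function is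
constant on the cosets of some normal admissible subgroup. -/
theorem statement9 (G : Type*) [Group G] [TopologicalSpace G] [IsTopologicalGroup G]
    (hG : SimplySMFactorizable G) :
    ∀ f : G → ℝ, Continuous f →
      ∃ N : Subgroup G, N.Normal ∧ IsAdmissible (N : Set G) ∧
        ∀ g : G, ∀ x ∈ N, f (g * x) = f g :=
  statement9_general G hG
end

section
/- Let G be an ω-narrow topological group such that for every continuous function f : G → ℝ there exists a normal admissible subgroup N of G with f constant on the coset gN for each g ∈ G. Then G is simply sm-factorizable. -/
open Topology TopologicalSpace Pointwise Function Set

/-- A (para)topological group is ω-narrow if each neighborhood of the identity translates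
over a countable set to cover the group. -/
def OmegaNarrow (G : Type*) [Group G] [TopologicalSpace G] : Prop :=
  ∀ U ∈ 𝓝 (1 : G), ∃ A : Set G, A.Countable ∧ A * U = Set.univ ∧ U * A = Set.univ

/-!
The function `f` with `U = f⁻¹(ℝ ∖ {0})` is constant on the cosets of some normal admissible
subgroup `N = ⋂ Uₙ`, so `U` is saturated for `G → G ⧸ N`, and it remains to put a separable
metrizable group topology on `G ⧸ N` making the projection continuous. The quotient topology
need not be first countable, so we use a coarser one: ω-narrowness lets every conjugate `x V x⁻¹`
of a neighbourhood `V` of `1` be controlled by one of countably many neighbourhoods (write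
`x = w a` with `a` in a countable set), so the `Uₙ` lie in a countable group filter basis of
neighbourhoods of `1` in `G`. Its image in `G ⧸ N` is a countable neighbourhood basis of a group
topology, Hausdorff since `⋂ Uₙ = N`, hence metrizable; it is separable because ω-narrowness
passes to continuous homomorphic images, and a first countable ω-narrow group is separable.
-/

open Filter

universe u

theorem Set.Countable.exists_countable_closure {α : Type*} {s p : Set α} (hs : s.Countable)
    (hsp : s ⊆ p) (g : α → α → Set α) (hgp : ∀ a ∈ p, ∀ b ∈ p, g a b ⊆ p)
    (hg : ∀ a ∈ p, ∀ b ∈ p, (g a b).Countable) :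
    ∃ t, s ⊆ t ∧ t ⊆ p ∧ t.Countable ∧ ∀ a ∈ t, ∀ b ∈ t, g a b ⊆ t := by
  let step : Set α → Set α := fun t => t ∪ ⋃ a ∈ t, ⋃ b ∈ t, g a b
  let T : ℕ → Set α := fun n => step^[n] s
  have hT : ∀ n, T (n + 1) = step (T n) := fun n => iterate_succ_apply' step n s
  have hmono : Monotone T := monotone_nat_of_le_succ fun n => by
    rw [hT]; exact subset_union_left
  have hTp : ∀ n, T n ⊆ p := by
    intro n
    induction n with
    | zero => exact hsp
    | succ n ih =>
      rw [hT]
      exact union_subset ih <| iUnion₂_subset fun a ha =>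
        iUnion₂_subset fun b hb => hgp a (ih ha) b (ih hb)
  refine ⟨⋃ n, T n, subset_iUnion T 0, iUnion_subset hTp, countable_iUnion fun n => ?_, ?_⟩
  · induction n with
    | zero => exact hs
    | succ n ih =>
      rw [hT]
      exact ih.union <| ih.biUnion fun a ha =>
        ih.biUnion fun b hb => hg a (hTp n ha) b (hTp n hb)
  · intro a ha b hb
    obtain ⟨m, ham⟩ := mem_iUnion.1 ha
    obtain ⟨k, hbk⟩ := mem_iUnion.1 hb
    have hgT : g a b ⊆ T (max m k + 1) := by
      rw [hT]
      exact subset_union_of_subset_right (subset_iUnion₂_of_subset a (hmono (le_max_left m k) ham)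
        (subset_iUnion₂ (s := fun b _ => g a b) b (hmono (le_max_right m k) hbk))) _
    exact hgT.trans (subset_iUnion T _)

section OmegaNarrow

variable {G : Type*} [Group G] [TopologicalSpace G]

theorem OmegaNarrow.exists_countable_conj_nhds [IsTopologicalGroup G] (hG : OmegaNarrow G)
    {U : Set G} (hU : U ∈ 𝓝 1) :
    ∃ 𝒪 : Set (Set G), 𝒪.Countable ∧ 𝒪 ⊆ (𝓝 1).sets ∧
      ∀ x : G, ∃ O ∈ 𝒪, O ⊆ (fun g => x * g * x⁻¹) ⁻¹' U := by
  have hconj : Tendsto (fun p : G × G => p.1 * p.2 * p.1⁻¹) (𝓝 1 ×ˢ 𝓝 1) (𝓝 1) := by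
    rw [← nhds_prod_eq]
    exact ((continuous_fst.mul continuous_snd).mul continuous_fst.inv).tendsto' _ _ (by simp)
  obtain ⟨W, hW, hWU⟩ := mem_prod_self_iff.1 (hconj hU)
  obtain ⟨A, hA, -, hWA⟩ := hG W hW
  refine ⟨(fun a => (fun g => a * g * a⁻¹) ⁻¹' W) '' A, hA.image _, ?_, fun x => ?_⟩
  · rintro _ ⟨a, -, rfl⟩
    exact ((continuous_const_mul a).mul continuous_const).continuousAt.preimage_mem_nhds
      (by simpa using hW)
  · obtain ⟨w, hw, a, ha, rfl⟩ := mem_mul.1 (hWA.symm ▸ mem_univ x)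
    refine ⟨_, mem_image_of_mem _ ha, fun g hg => ?_⟩
    have := hWU (mk_mem_prod hw hg)
    simp only [mem_preimage] at this ⊢
    convert this using 1
    group

theorem OmegaNarrow.exists_countable_groupFilterBasis [IsTopologicalGroup G]
    (hG : OmegaNarrow G) {s : Set (Set G)} (hs : s.Countable) (hs1 : s ⊆ (𝓝 1).sets) :
    ∃ B : GroupFilterBasis G, B.sets.Countable ∧ B.sets ⊆ (𝓝 1).sets ∧ s ⊆ B.sets := by
  choose! half half_mem _ half_inv half_mul using
    fun U (hU : U ∈ 𝓝 (1 : G)) => exists_closed_nhds_one_inv_eq_mul_subset hU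
  choose! conj conj_countable conj_nhds conj_spec using
    fun U (hU : U ∈ 𝓝 (1 : G)) => hG.exists_countable_conj_nhds hU
  obtain ⟨t, hst, ht1, htc, ht⟩ := (hs.insert univ).exists_countable_closure
    (insert_subset univ_mem hs1) (fun U V => insert (U ∩ V) (insert (half U) (conj U)))
    (fun U hU V hV =>
      insert_subset (inter_mem hU hV) (insert_subset (half_mem U hU) (conj_nhds U hU)))
    (fun U hU _ _ => ((conj_countable U hU).insert _).insert _)
  have half_mem_t : ∀ U ∈ t, half U ∈ t := fun U hU => ht U hU U hU (by simp)
  refine ⟨{ sets := t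
            nonempty := ⟨univ, hst (mem_insert _ _)⟩
            inter_sets := fun {U V} hU hV => ⟨U ∩ V, ht U hU V hV (mem_insert _ _), subset_rfl⟩
            one' := fun hU => mem_of_mem_nhds (ht1 hU)
            mul' := fun {U} hU => ⟨half U, half_mem_t U hU, half_mul U (ht1 hU)⟩
            inv' := fun {U} hU => ⟨half U, half_mem_t U hU, fun v hv => ?_⟩
            conj' := fun x {U} hU => ?_ }, htc, ht1, (subset_insert _ _).trans hst⟩
  · have hv' : v⁻¹ ∈ half U := by rw [← half_inv U (ht1 hU)]; exact inv_mem_inv.2 hv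
    simpa using half_mul U (ht1 hU) (mul_mem_mul hv' (mem_of_mem_nhds (half_mem U (ht1 hU))))
  · obtain ⟨O, hO, hOU⟩ := conj_spec U (ht1 hU) x
    exact ⟨O, ht U hU U hU (by simp [hO]), hOU⟩

theorem OmegaNarrow.map {H : Type*} [Group H] [TopologicalSpace H] (hG : OmegaNarrow G)
    (f : G →* H) (hf : Continuous f) (hsurj : Surjective f) : OmegaNarrow H := by
  intro U hU
  obtain ⟨A, hA, hAU, hUA⟩ := hG _ (hf.continuousAt.preimage_mem_nhds (by rwa [map_one]))
  refine ⟨f '' A, hA.image f, eq_univ_of_univ_subset ?_, eq_univ_of_univ_subset ?_⟩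
  · rw [← hsurj.range_eq, ← image_univ, ← hAU, image_mul]
    exact mul_subset_mul_left (image_preimage_subset f U)
  · rw [← hsurj.range_eq, ← image_univ, ← hUA, image_mul]
    exact mul_subset_mul_right (image_preimage_subset f U)

theorem OmegaNarrow.separableSpace [IsTopologicalGroup G] [(𝓝 (1 : G)).IsCountablyGenerated]
    (hG : OmegaNarrow G) : SeparableSpace G := by
  obtain ⟨V, hV⟩ := (𝓝 (1 : G)).exists_antitone_basis
  choose A hA hAV using fun n => hG (V n)⁻¹ (inv_mem_nhds_one G (hV.mem n))
  refine ⟨⋃ n, A n, countable_iUnion hA, dense_iff_inter_open.2 fun O hO ⟨x, hx⟩ => ?_⟩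
  have hxO : (x * ·) ⁻¹' O ∈ 𝓝 (1 : G) :=
    (continuous_const_mul x).continuousAt.preimage_mem_nhds (by simpa using hO.mem_nhds hx)
  obtain ⟨n, -, hn⟩ := hV.toHasBasis.mem_iff.1 hxO
  obtain ⟨a, ha, v, hv, hav⟩ := mem_mul.1 ((hAV n).1 ▸ mem_univ x)
  refine ⟨a, ?_, mem_iUnion.2 ⟨n, ha⟩⟩
  have : x * v⁻¹ = a := by rw [← hav]; group
  exact this ▸ hn hv

end OmegaNarrow

abbrev GroupFilterBasis.map {G H : Type*} [Group G] [Group H] (B : GroupFilterBasis G)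
    (f : G →* H) (hf : Surjective f) : GroupFilterBasis H where
  sets := image f '' B.sets
  nonempty := B.nonempty.image _
  inter_sets := by
    rintro _ _ ⟨U, hU, rfl⟩ ⟨V, hV, rfl⟩
    obtain ⟨W, hW, hWUV⟩ := B.inter_sets hU hV
    exact ⟨f '' W, mem_image_of_mem _ hW, (image_mono hWUV).trans (image_inter_subset _ _ _)⟩
  one' := by
    rintro _ ⟨U, hU, rfl⟩
    exact ⟨1, B.one' hU, map_one f⟩
  mul' := by
    rintro _ ⟨U, hU, rfl⟩
    obtain ⟨V, hV, hVU⟩ := B.mul' hU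
    exact ⟨f '' V, mem_image_of_mem _ hV, image_mul f ▸ image_mono hVU⟩
  inv' := by
    rintro _ ⟨U, hU, rfl⟩
    obtain ⟨V, hV, hVU⟩ := B.inv' hU
    exact ⟨f '' V, mem_image_of_mem _ hV, by
      rintro _ ⟨v, hv, rfl⟩; exact ⟨v⁻¹, hVU hv, map_inv f v⟩⟩
  conj' := by
    intro y
    rintro _ ⟨U, hU, rfl⟩
    obtain ⟨x, rfl⟩ := hf y
    obtain ⟨V, hV, hVU⟩ := B.conj' x hU
    exact ⟨f '' V, mem_image_of_mem _ hV, by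
      rintro _ ⟨v, hv, rfl⟩; exact ⟨x * v * x⁻¹, hVU hv, by simp⟩⟩

theorem IsTopologicalGroup.metrizableSpace_of_isCountablyGenerated {G : Type*} [Group G]
    [TopologicalSpace G] [IsTopologicalGroup G] [T0Space G] [(𝓝 (1 : G)).IsCountablyGenerated] :
    MetrizableSpace G :=
  let := IsTopologicalGroup.rightUniformSpace G
  have : (uniformity G).IsCountablyGenerated := Filter.comap.isCountablyGenerated _ _
  UniformSpace.metrizableSpace

theorem OmegaNarrow.exists_separable_metrizable_quotient {G : Type u} [Group G]
    [TopologicalSpace G] [IsTopologicalGroup G] (hG : OmegaNarrow G) (N : Subgroup G) [N.Normal]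
    (hN : IsAdmissible (N : Set G)) :
    ∃ (H : Type u) (_ : Group H) (_ : TopologicalSpace H), IsTopologicalGroup H ∧
      SeparableSpace H ∧ MetrizableSpace H ∧
      ∃ π : G →* H, Continuous π ∧ Surjective π ∧ π.ker = N := by
  obtain ⟨U, hU, hUU, hNU⟩ := hN
  obtain ⟨B, hBc, hB1, hUB⟩ := hG.exists_countable_groupFilterBasis (countable_range U)
    (range_subset_iff.2 fun n => (hU n).1.mem_nhds (hU n).2.1)
  let π := QuotientGroup.mk' N
  have hπ : Surjective π := QuotientGroup.mk'_surjective N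
  let B' := B.map π hπ
  -- shadows the (finer) quotient topology instance on `G ⧸ N`
  let := B'.topology
  have := B'.isTopologicalGroup
  have hπc : Continuous π := by
    refine continuous_of_continuousAt_one π ?_
    rw [ContinuousAt, map_one, B'.nhds_one_hasBasis.tendsto_right_iff]
    rintro _ ⟨V, hV, rfl⟩
    exact mem_of_superset (hB1 hV) (subset_preimage_image π V)
  have : (𝓝 (1 : G ⧸ N)).IsCountablyGenerated :=
    HasCountableBasis.isCountablyGenerated ⟨B'.nhds_one_hasBasis, hBc.image _⟩
  have : T2Space (G ⧸ N) := by
    refine IsTopologicalGroup.t2Space_of_one_sep fun y hy => ?_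
    obtain ⟨x, rfl⟩ := hπ y
    have hxN : x ∉ ⋂ n, U n := hNU ▸ fun h => hy ((QuotientGroup.eq_one_iff x).2 h)
    obtain ⟨n, hn⟩ : ∃ n, x ∉ U n := by simpa using hxN
    refine ⟨π '' U (n + 1), B'.mem_nhds_one ⟨_, hUB ⟨n + 1, rfl⟩, rfl⟩, ?_⟩
    rintro ⟨u, hu, hux⟩
    have hUN : U (n + 1) * N ⊆ U n :=
      (mul_subset_mul_left (hNU ▸ iInter_subset U (n + 1))).trans (hUU n)
    exact hn (hUN ⟨u, hu, u⁻¹ * x, QuotientGroup.eq.1 hux, mul_inv_cancel_left u x⟩)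
  exact ⟨G ⧸ N, inferInstance, B'.topology, inferInstance, (hG.map π hπc hπ).separableSpace,
    IsTopologicalGroup.metrizableSpace_of_isCountablyGenerated, π, hπc, hπ, QuotientGroup.ker_mk' N⟩

theorem small_of_separableSpace_of_metrizableSpace (X : Type*) [TopologicalSpace X] [Nonempty X]
    [SeparableSpace X] [MetrizableSpace X] : Small.{0} X :=
  let := metrizableSpaceMetric X
  small_of_injective (kuratowskiEmbedding.isometry X).injective

section Shrink

variable (X : Type*) [Group X] [TopologicalSpace X] [Small.{0} X]

theorem Shrink.continuous_mulEquiv_symm : Continuous (Shrink.mulEquiv (α := X)).symm :=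
  (Shrink.homeomorph X).continuous

instance [IsTopologicalGroup X] : IsTopologicalGroup (Shrink.{0} X) :=
  (Shrink.homeomorph X).symm.isInducing.topologicalGroup Shrink.mulEquiv

instance [SeparableSpace X] : SeparableSpace (Shrink.{0} X) :=
  (Shrink.homeomorph X).surjective.denseRange.separableSpace (Shrink.homeomorph X).continuous

instance [MetrizableSpace X] : MetrizableSpace (Shrink.{0} X) :=
  (Shrink.homeomorph X).symm.isEmbedding.metrizableSpace

end Shrink

theorem MonoidHom.preimage_image_eq_of_mul_ker {G H : Type*} [Group G] [Group H] (π : G →* H)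
    {U : Set G} (hU : ∀ g ∈ U, ∀ x ∈ π.ker, g * x ∈ U) : π ⁻¹' (π '' U) = U := by
  refine (subset_preimage_image π U).antisymm' ?_
  rintro x ⟨u, hu, hux⟩
  simpa using hU u hu (u⁻¹ * x) (by simp [MonoidHom.mem_ker, hux])

/-- An ω-narrow topological group in which every continuous real-valued function is constant
on the cosets of some normal admissible subgroup is simply sm-factorizable. -/
theorem statement10 (G : Type*) [Group G] [TopologicalSpace G] [IsTopologicalGroup G]
    (hNar : OmegaNarrow G)
    (hConst : ∀ f : G → ℝ, Continuous f →
      ∃ N : Subgroup G, N.Normal ∧ IsAdmissible (N : Set G) ∧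
        ∀ g : G, ∀ x ∈ N, f (g * x) = f g) :
    SimplySMFactorizable G := by
  rintro _ ⟨f, hf, rfl⟩
  obtain ⟨N, _, hNadm, hfN⟩ := hConst f hf
  obtain ⟨H, _, _, _, _, _, π, hπc, hπ, rfl⟩ := hNar.exists_separable_metrizable_quotient N hNadm
  have := small_of_separableSpace_of_metrizableSpace H
  let e : H ≃* Shrink.{0} H := Shrink.mulEquiv.symm
  refine ⟨Shrink.{0} H, inferInstance, inferInstance, inferInstance, inferInstance, inferInstance,
    (e : H →* Shrink.{0} H).comp π, (Shrink.continuous_mulEquiv_symm H).comp hπc,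
    e.surjective.comp hπ, MonoidHom.preimage_image_eq_of_mul_ker _ fun g hg x hx => ?_⟩
  rw [MonoidHom.ker_mulEquiv_comp] at hx
  simpa [hfN g x hx] using hg
end

section
/- Every regular simply sm-factorizable paratopological group G whose identity is the intersection of countably many open sets admits a continuous bijective homomorphism onto a separable metrizable paratopological group; in particular, G is strongly submetrizable and the cardinality of G is at most 𝔠 = 2^ω. -/
/-!
A regular paratopological group is completely regular at the identity. Call a pair `(c, u)`
separated if `closure (c * W) ⊆ u` for some neighbourhood `W` of `1`. Such a pair can be
interpolated without any normality of the space: choosing `W₁ * W₁ ⊆ W`, the open set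
`v = interior (closure (c * W₁))` contains `c` (because `closure s * W₁` is a neighbourhood of
every point of `closure s`), and both `(c, v)` and `(closure v, u)` are again separated. So
Urysohn's construction runs on separated pairs, and regularity is only needed to produce the first
one, `(closure {1}, interior V)`; this gives a cozero neighbourhood of `1` inside any
neighbourhood `V` of `1`.

Hence `{1}` is the intersection of countably many cozero sets `U n`. A homomorphism `π n` onto a
separable metrizable group that saturates `U n` has its kernel inside `U n`, so the diagonal
`G →* ∏ n, H n` is a continuous injective homomorphism into a separable metrizable group; its
range is the required target. A second countable T₀ space has at most `2 ^ ℵ₀` points.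
-/

open Topology TopologicalSpace Pointwise Function Set

/-- A paratopological group is simply sm-factorizable if every cozero set is saturated with
respect to some continuous surjective homomorphism onto a separable metrizable paratopological group. -/
def SimplySMFactorizablePara (G : Type*) [Group G] [TopologicalSpace G] : Prop :=
  ∀ U : Set G, IsCozero U →
    ∃ (H : Type) (gH : Group H) (tH : TopologicalSpace H),
      letI := gH
      letI := tH
      ContinuousMul H ∧ SeparableSpace H ∧ MetrizableSpace H ∧
        ∃ π : G →* H, Continuous π ∧ Surjective π ∧ ⇑π ⁻¹' (⇑π '' U) = U

/-- A paratopological group is strongly submetrizable if it admits a continuous bijective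
homomorphism onto a separable metrizable paratopological group. -/
def StronglySubmetrizablePara (H : Type*) [Group H] [TopologicalSpace H] : Prop :=
  ∃ (K : Type) (gK : Group K) (tK : TopologicalSpace K),
    letI := gK
    letI := tK
    ContinuousMul K ∧ SeparableSpace K ∧ MetrizableSpace K ∧
      ∃ i : H →* K, Continuous i ∧ Bijective i

section

variable {G : Type*} [Group G] [TopologicalSpace G] [ContinuousMul G]

theorem closure_mul_subset_closure_mul (s t : Set G) : closure s * t ⊆ closure (s * t) :=
  mul_subset_iff.2 fun _ ha b hb =>
    map_mem_closure (f := (· * b)) (continuous_mul_const b) ha fun _ hx => mul_mem_mul hx hb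

theorem closure_subset_interior_closure_mul (s : Set G) {W : Set G} (hW : W ∈ 𝓝 1) :
    closure s ⊆ interior (closure (s * W)) := fun z hz =>
  mem_interior_iff_mem_nhds.2 <|
    Filter.mem_of_superset (singleton_mul_mem_nhds_of_nhds_one z hW) <|
      (mul_subset_mul_right (singleton_subset_iff.2 hz)).trans (closure_mul_subset_closure_mul s W)

theorem exists_open_between_of_closure_mul_subset {c u W : Set G} (hW : W ∈ 𝓝 1)
    (hcu : closure (c * W) ⊆ u) :
    ∃ v, IsOpen v ∧ c ⊆ v ∧ closure v ⊆ u ∧ (∃ W ∈ 𝓝 (1 : G), closure (c * W) ⊆ v) ∧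
      ∃ W ∈ 𝓝 (1 : G), closure (closure v * W) ⊆ u := by
  obtain ⟨W₁, hW₁, hW₁W⟩ := exists_nhds_one_split hW
  obtain ⟨W₂, hW₂, hW₂W₁⟩ := exists_nhds_one_split hW₁
  have hcW₁ : closure (c * W₁ * W₁) ⊆ u := by
    rw [mul_assoc]
    exact (closure_mono (mul_subset_mul_left (mul_subset_iff.2 hW₁W))).trans hcu
  have hv : closure (interior (closure (c * W₁))) ⊆ closure (c * W₁) :=
    closure_minimal interior_subset isClosed_closure
  refine ⟨interior (closure (c * W₁)), isOpen_interior,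
    subset_closure.trans (closure_subset_interior_closure_mul c hW₁),
    hv.trans ((closure_mono (subset_mul_left _ (mem_of_mem_nhds hW₁))).trans hcW₁),
    ⟨W₂, hW₂, ?_⟩, ⟨W₁, hW₁, ?_⟩⟩
  · calc closure (c * W₂) ⊆ interior (closure (c * W₂ * W₂)) :=
          closure_subset_interior_closure_mul _ hW₂
      _ ⊆ interior (closure (c * W₁)) := by
          rw [mul_assoc]
          exact interior_mono (closure_mono (mul_subset_mul_left (mul_subset_iff.2 hW₂W₁)))
  · calc closure (closure (interior (closure (c * W₁))) * W₁)
        ⊆ closure (closure (c * W₁) * W₁) := closure_mono (mul_subset_mul_right hv)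
      _ ⊆ closure (c * W₁ * W₁) :=
          closure_minimal (closure_mul_subset_closure_mul _ _) isClosed_closure
      _ ⊆ u := hcW₁

theorem exists_isCozero_one_mem_subset [RegularSpace G] {V : Set G} (hV : V ∈ 𝓝 1) :
    ∃ U : Set G, IsCozero U ∧ (1 : G) ∈ U ∧ U ⊆ V := by
  obtain ⟨W, hW, hWc, hWV⟩ := exists_mem_nhds_isClosed_subset (interior_mem_nhds.2 hV)
  let c : Urysohns.CU fun c u : Set G => ∃ W ∈ 𝓝 (1 : G), closure (c * W) ⊆ u :=
    { C := closure {1}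
      U := interior V
      P_C_U := ⟨W, hW, (closure_minimal (by simpa only [singleton_one, one_mul, hWc.closure_eq]
        using closure_mul_subset_closure_mul {(1 : G)} W) hWc).trans hWV⟩
      closed_C := isClosed_closure
      open_U := isOpen_interior
      subset := (closure_minimal (singleton_subset_iff.2 (mem_of_mem_nhds hW)) hWc).trans hWV
      hP := fun _ ⟨_, hW, hcu⟩ _ _ => exists_open_between_of_closure_mul_subset hW hcu }
  refine ⟨(fun x => 1 - c.lim x) ⁻¹' {x | x ≠ 0}, ⟨_, continuous_const.sub c.continuous_lim, rfl⟩,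
    ?_, fun x hx => ?_⟩
  · simp [c.lim_of_mem_C 1 (subset_closure rfl)]
  · by_contra hxV
    exact hx (by simp [c.lim_of_notMem_U x fun h => hxV (interior_subset h)])

end

theorem mk_le_continuum_of_secondCountableTopology (X : Type*) [TopologicalSpace X]
    [SecondCountableTopology X] [T0Space X] : Cardinal.mk X ≤ Cardinal.continuum := by
  let B := countableBasis X
  have hB := isBasis_countableBasis X
  have : Countable B := (countable_countableBasis X).to_subtype
  have hinj : Injective fun x : X => {b : B | x ∈ (b : Set X)} := fun x y hxy =>
    Inseparable.eq <| inseparable_iff_forall_isOpen.2 fun s hs => by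
      have hmem (b : B) : x ∈ (b : Set X) ↔ y ∈ (b : Set X) := Set.ext_iff.1 hxy b
      refine ⟨fun hx => ?_, fun hy => ?_⟩
      · obtain ⟨b, hb, hxb, hbs⟩ := hB.exists_subset_of_mem_open hx hs
        exact hbs ((hmem ⟨b, hb⟩).1 hxb)
      · obtain ⟨b, hb, hyb, hbs⟩ := hB.exists_subset_of_mem_open hy hs
        exact hbs ((hmem ⟨b, hb⟩).2 hyb)
  calc Cardinal.mk X ≤ Cardinal.mk (Set B) := Cardinal.mk_le_of_injective hinj
    _ = 2 ^ Cardinal.mk B := Cardinal.mk_set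
    _ ≤ 2 ^ Cardinal.aleph0 := Cardinal.power_le_power_left two_ne_zero Cardinal.mk_le_aleph0
    _ = Cardinal.continuum := Cardinal.two_power_aleph0

theorem secondCountableTopology_of_separableSpace (X : Type*) [TopologicalSpace X]
    [SeparableSpace X] [PseudoMetrizableSpace X] : SecondCountableTopology X :=
  letI := pseudoMetrizableSpacePseudoMetric X
  UniformSpace.secondCountable_of_separable X

namespace StronglySubmetrizablePara

variable {G : Type*} [Group G] [TopologicalSpace G]

theorem of_injective {K : Type} [Group K] [TopologicalSpace K] [ContinuousMul K]
    [SeparableSpace K] [MetrizableSpace K] (φ : G →* K) (hφ : Continuous φ) (hinj : Injective φ) :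
    StronglySubmetrizablePara G :=
  have : SeparableSpace φ.range := (IsSeparable.of_separableSpace _).separableSpace
  ⟨φ.range, inferInstance, inferInstance, inferInstanceAs (ContinuousMul φ.range.toSubmonoid),
    this, IsEmbedding.subtypeVal.metrizableSpace, φ.rangeRestrict, hφ.subtype_mk _,
    ⟨(φ.rangeRestrict_injective_iff).2 hinj, φ.rangeRestrict_surjective⟩⟩

theorem cardinal_mk_le_continuum (hG : StronglySubmetrizablePara G) :
    Cardinal.mk G ≤ Cardinal.continuum := by
  obtain ⟨K, _, _, -, _, _, i, -, hi⟩ := hG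
  have := secondCountableTopology_of_separableSpace K
  rw [← Cardinal.lift_le_continuum.{_, 0}, Cardinal.lift_mk_eq'.2 ⟨Equiv.ofBijective i hi⟩,
    Cardinal.lift_le_continuum]
  exact mk_le_continuum_of_secondCountableTopology K

end StronglySubmetrizablePara

theorem MonoidHom.ker_subset_of_preimage_image_eq {G H : Type*} [Group G] [Group H] (π : G →* H)
    {U : Set G} (hU : π ⁻¹' (π '' U) = U) (h1 : (1 : G) ∈ U) : (π.ker : Set G) ⊆ U :=
  fun g hg => hU ▸ ⟨1, h1, by rw [map_one, hg.symm]⟩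

theorem SimplySMFactorizablePara.stronglySubmetrizablePara {G : Type*} [Group G]
    [TopologicalSpace G]
    (hG : SimplySMFactorizablePara G) {U : ℕ → Set G} (hU : ∀ n, IsCozero (U n))
    (h1 : ∀ n, (1 : G) ∈ U n) (hinter : ⋂ n, U n ⊆ {1}) : StronglySubmetrizablePara G := by
  choose H gH tH hcm hsep hmet π hπ _ hsat using fun n => hG (U n) (hU n)
  -- `choose` does not register the chosen structures as local instances.
  let _ := gH
  let _ := tH
  have _ : ∀ n, MetrizableSpace (H n) := hmet
  have _ : ∀ n, SeparableSpace (H n) := hsep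
  have _ : ∀ n, ContinuousMul (H n) := hcm
  -- The countable product is metrizable through Urysohn's metrization theorem.
  have _ (n : ℕ) : SecondCountableTopology (H n) := secondCountableTopology_of_separableSpace (H n)
  exact StronglySubmetrizablePara.of_injective (MonoidHom.pi π) (continuous_pi hπ) <|
    (injective_iff_map_eq_one _).2 fun g hg => hinter <| mem_iInter.2 fun n =>
      (π n).ker_subset_of_preimage_image_eq (hsat n) (h1 n) (congrFun hg n)

theorem statement14_general (G : Type*) [Group G] [TopologicalSpace G] [ContinuousMul G]
    [RegularSpace G] (hG : SimplySMFactorizablePara G)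
    (hpsi : ∃ V : ℕ → Set G, (∀ n, IsOpen (V n)) ∧ ({(1 : G)} : Set G) = ⋂ n, V n) :
    StronglySubmetrizablePara G ∧ Cardinal.mk G ≤ Cardinal.continuum := by
  obtain ⟨V, hVo, hV⟩ := hpsi
  have hV1 (n : ℕ) : (1 : G) ∈ V n := mem_iInter.1 (hV ▸ rfl) n
  choose U hUcoz hU1 hUV using fun n => exists_isCozero_one_mem_subset ((hVo n).mem_nhds (hV1 n))
  have hsub := hG.stronglySubmetrizablePara hUcoz hU1 (hV ▸ iInter_mono hUV)
  exact ⟨hsub, hsub.cardinal_mk_le_continuum⟩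

/-- Every regular simply sm-factorizable paratopological group of countable pseudocharacter is
strongly submetrizable and has cardinality at most 𝔠. -/
theorem statement14 (G : Type*) [Group G] [TopologicalSpace G] [ContinuousMul G]
    [T1Space G] [RegularSpace G] (hG : SimplySMFactorizablePara G)
    (hpsi : ∃ V : ℕ → Set G, (∀ n, IsOpen (V n)) ∧ ({(1 : G)} : Set G) = ⋂ n, V n) :
    StronglySubmetrizablePara G ∧ Cardinal.mk G ≤ Cardinal.continuum :=
  statement14_general G hG hpsi
end
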